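/- Let G be a connected directed graph on {1,…,m} and let b be edge weights with b_kl > 0 for all edges kl of G (set b_kl = 0 for non-edges). Then there exists a vector p ∈ ℝ_{>0}^m, unique up to multiplication by a positive scalar, satisfying the balance equations Σ_i p_i b_ij = p_j Σ_i b_ji for every vertex j; moreover the vector defined by p_i = Σ_{T a spanning i-tree of G} Π_{kl ∈ T} b_kl is such a solution. -/

import Mathlib

open scoped Classical

namespace Money

/-- A finite simple directed graph without loops, on a subset of `Fin n`. -/
structure Digraph (n : ℕ) where
  verts : Finset (Fin n)
  edges : Finset (Fin n × Fin n)
  mem_verts : ∀ e ∈ edges, e.1 ∈ verts ∧ e.2 ∈ verts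
  no_loops : ∀ e ∈ edges, e.1 ≠ e.2

namespace Digraph

variable {n : ℕ}

/-- There is a directed path (possibly empty) from `i` to `j`. -/
def Reaches (G : Digraph n) : Fin n → Fin n → Prop :=
  Relation.ReflTransGen fun a b => (a, b) ∈ G.edges

/-- `G` is connected: nonempty, and any vertex reaches any other by a directed path. -/
def Connected (G : Digraph n) : Prop :=
  G.verts.Nonempty ∧ ∀ i ∈ G.verts, ∀ j ∈ G.verts, G.Reaches i j

/-- `T` is (the edge set of) a spanning `i`-tree of `G`: every vertex `j ≠ i`
has a unique directed path in `T` to `i`. -/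
def IsSpanTree (G : Digraph n) (i : Fin n) (T : Finset (Fin n × Fin n)) : Prop :=
  T ⊆ G.edges ∧
  (∀ j ∈ G.verts, j ≠ i → ∃! k, (j, k) ∈ T) ∧
  (∀ k, (i, k) ∉ T) ∧
  ∀ j ∈ G.verts, Relation.ReflTransGen (fun a b => (a, b) ∈ T) j i

/-- The spanning-tree price of vertex `i` at edge weights `b`. -/
noncomputable def price (G : Digraph n) (i : Fin n) (b : Fin n × Fin n → ℝ) : ℝ :=
  ∑ T ∈ G.edges.powerset.filter (fun T => G.IsSpanTree i T), ∏ e ∈ T, b e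

/-- The price-ratio function `b ↦ p_i(b)/p_j(b)`. -/
noncomputable def priceRatio (G : Digraph n) (i j : Fin n) (b : Fin n × Fin n → ℝ) : ℝ :=
  G.price i b / G.price j b

/-- An edge coordinate `e` is influential for `f` (as a function on positive
weight vectors on the edges of `G`). -/
def Influential (G : Digraph n) (f : (Fin n × Fin n → ℝ) → ℝ) (e : Fin n × Fin n) : Prop :=
  ∃ b b' : Fin n × Fin n → ℝ,
    (∀ e' ∈ G.edges, 0 < b e') ∧ (∀ e' ∈ G.edges, 0 < b' e') ∧
    (∀ e', e' ≠ e → b e' = b' e') ∧ f b ≠ f b'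

/-- `π_ij(G)`: the number of influential edges of the price-ratio `p_i/p_j`. -/
noncomputable def priceCplxPair (G : Digraph n) (i j : Fin n) : ℕ :=
  (G.edges.filter (fun e => G.Influential (G.priceRatio i j) e)).card

/-- The price complexity `π(G) = max_{i ≠ j} π_ij(G)`. -/
noncomputable def priceComplexity (G : Digraph n) : ℕ :=
  ((G.verts ×ˢ G.verts).filter fun p => p.1 ≠ p.2).sup fun p => G.priceCplxPair p.1 p.2

/-- There is a directed walk of length `k` from `i` to `j`. -/
def HasWalk (G : Digraph n) (i j : Fin n) (k : ℕ) : Prop :=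
  ∃ g : ℕ → Fin n, g 0 = i ∧ g k = j ∧ ∀ t < k, (g t, g (t + 1)) ∈ G.edges

/-- Length of a shortest directed path from `i` to `j`. -/
noncomputable def dist (G : Digraph n) (i j : Fin n) : ℕ := sInf {k | G.HasWalk i j k}

/-- The time complexity `τ(G)`: the diameter of `G`. -/
noncomputable def timeComplexity (G : Digraph n) : ℕ :=
  ((G.verts ×ˢ G.verts).filter fun p => p.1 ≠ p.2).sup fun p => G.dist p.1 p.2

def outdeg (G : Digraph n) (v : Fin n) : ℕ := (G.edges.filter fun e => e.1 = v).card

def indeg (G : Digraph n) (v : Fin n) : ℕ := (G.edges.filter fun e => e.2 = v).card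

/-- A directed cycle: connected, and every vertex has exactly one outgoing
and one incoming edge. -/
def IsCycleGraph (G : Digraph n) : Prop :=
  G.Connected ∧ ∀ v ∈ G.verts, G.outdeg v = 1 ∧ G.indeg v = 1

/-- `P` is a (simple) directed path from `s` to `t`, `s ≠ t`. -/
def IsPathGraph (P : Digraph n) (s t : Fin n) : Prop :=
  s ≠ t ∧ s ∈ P.verts ∧ t ∈ P.verts ∧
  (∀ v ∈ P.verts, P.Reaches s v ∧ P.Reaches v t) ∧
  (∀ v ∈ P.verts, v ≠ t → P.outdeg v = 1) ∧ P.outdeg t = 0 ∧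
  (∀ v ∈ P.verts, v ≠ s → P.indeg v = 1) ∧ P.indeg s = 0

/-- Union of two digraphs. -/
def union (G H : Digraph n) : Digraph n where
  verts := G.verts ∪ H.verts
  edges := G.edges ∪ H.edges
  mem_verts := by
    intro e he
    rcases Finset.mem_union.mp he with h | h
    · exact ⟨Finset.mem_union_left _ (G.mem_verts e h).1,
        Finset.mem_union_left _ (G.mem_verts e h).2⟩
    · exact ⟨Finset.mem_union_right _ (H.mem_verts e h).1,
        Finset.mem_union_right _ (H.mem_verts e h).2⟩
  no_loops := by
    intro e he
    rcases Finset.mem_union.mp he with h | h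
    · exact G.no_loops e h
    · exact H.no_loops e h

/-- A chorded cycle: a directed cycle `C` together with a directed path `P`
joining two distinct vertices of `C`, otherwise disjoint from `C`. -/
def IsChordedCycle (G : Digraph n) : Prop :=
  ∃ (C P : Digraph n) (s t : Fin n),
    C.IsCycleGraph ∧ P.IsPathGraph s t ∧ s ∈ C.verts ∧ t ∈ C.verts ∧
    P.verts ∩ C.verts = {s, t} ∧ Disjoint C.edges P.edges ∧ G = C.union P

/-- A `k`-rose: `k` directed cycles sharing a single common vertex, otherwise
pairwise disjoint.  A `0`-rose is a single vertex. -/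
def IsRose (G : Digraph n) (k : ℕ) : Prop :=
  ∃ (j : Fin n) (C : Fin k → Digraph n),
    (∀ i, (C i).IsCycleGraph) ∧ (∀ i, j ∈ (C i).verts) ∧
    (∀ i i', i ≠ i' → (C i).verts ∩ (C i').verts = {j}) ∧
    G.verts = insert j (Finset.univ.biUnion fun i => (C i).verts) ∧
    G.edges = Finset.univ.biUnion fun i => (C i).edges

/-- `H` is a subgraph of `G` (obtained by deleting some edges and vertices). -/
def IsSubgraph (H G : Digraph n) : Prop := H.verts ⊆ G.verts ∧ H.edges ⊆ G.edges

/-- The circuit rank `c(G) = e(G) - v(G) + 1`. -/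
def circuitRank (G : Digraph n) : ℤ := (G.edges.card : ℤ) - (G.verts.card : ℤ) + 1

/-- The edge `ij` is collapsible. -/
def Collapsible (G : Digraph n) (i j : Fin n) : Prop :=
  (i, j) ∈ G.edges ∧ G.outdeg i = 1 ∧ (j, i) ∉ G.edges ∧
  ∀ k, ¬((k, i) ∈ G.edges ∧ (k, j) ∈ G.edges)

/-- `G` is rigid: no collapsible edges. -/
def Rigid (G : Digraph n) : Prop := ∀ i j, ¬G.Collapsible i j

/-- `k` covers the ordinary vertex `i` (whose unique outgoing edge is `ij`). -/
def Covers (G : Digraph n) (k i : Fin n) : Prop :=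
  G.outdeg i = 1 ∧ ∃ j, (i, j) ∈ G.edges ∧
    (((k, i) ∈ G.edges ∧ (k, j) ∈ G.edges) ∨ (k = j ∧ (j, i) ∈ G.edges))

/-- A star on all of `Fin n`: a center joined to every other vertex by a pair
of oppositely directed edges, and no other edges. -/
def IsStar (G : Digraph n) : Prop :=
  ∃ c : Fin n, G.verts = Finset.univ ∧
    G.edges = Finset.univ.filter fun e => (e.1 = c ∧ e.2 ≠ c) ∨ (e.2 = c ∧ e.1 ≠ c)

/-- The complete directed graph on all of `Fin n`. -/
def IsComplete (G : Digraph n) : Prop :=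
  G.verts = Finset.univ ∧ G.edges = Finset.univ.filter fun e => e.1 ≠ e.2

/-- A chorded triangle: a 3-cycle `u → v → w → u` together with the
bidirected pair between `u` and `w`. -/
def IsChordedTriangle (T : Digraph n) : Prop :=
  ∃ u v w : Fin n, u ≠ v ∧ v ≠ w ∧ u ≠ w ∧
    T.verts = {u, v, w} ∧ T.edges = {(u, w), (w, u), (u, v), (v, w)}

end Digraph

end Money


/-! Both sides of the balance equation at `j` expand, edge by edge, into one sum over the
functional subgraphs whose cycle passes through `j`. Such a subgraph is a spanning `j`-tree plus an
out-edge of `j`, and also a spanning `i`-tree plus the edge `(i, j)`, where `i` is the predecessor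
of `j` on the cycle. Shortest paths give a spanning tree, so the tree vector is positive.
Uniqueness is a maximum principle: for positive solutions `p`, `q` and `c = min p / q`, the
nonnegative solution `p - c q` vanishes somewhere, and the balance equation at a zero forces
zeros at all in-neighbours, hence everywhere by connectivity. -/

namespace Relation

variable {α : Type*} {r : α → α → Prop} {a b : α}

theorem ReflTransGen.exists_first_mem {S : Set α} (hb : b ∈ S) (h : ReflTransGen r a b) :
    ∃ c ∈ S, ReflTransGen (fun x y => r x y ∧ x ∉ S) a c := by
  induction h using ReflTransGen.head_induction_on with
  | refl => exact ⟨b, hb, .refl⟩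
  | @head x y hxy _ ih =>
    obtain ⟨c, hc, hyc⟩ := ih
    by_cases hx : x ∈ S
    · exact ⟨x, hx, .refl⟩
    · exact ⟨c, hc, .head ⟨hxy, hx⟩ hyc⟩

theorem ReflTransGen.restrict_ne (h : ReflTransGen r a b) :
    ReflTransGen (fun x y => r x y ∧ x ≠ b) a b := by
  obtain ⟨c, rfl, hc⟩ := h.exists_first_mem (S := {b}) rfl
  exact hc

/-- On a cycle of a deterministic relation, a vertex has only one predecessor. -/
theorem eq_of_rel_of_rel_of_reflTransGen (hr : Relator.RightUnique r) {i i' j : α}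
    (hi : r i j) (hi' : r i' j) (h : ReflTransGen r j i) (h' : ReflTransGen r j i') :
    i = i' := by
  set S : Set α := {i, i'}
  obtain ⟨c, hcS, hjc⟩ := h.exists_first_mem (S := S) (by simp [S])
  -- the path from `j` to its first visit `c` of `S` closes up, since `c` steps back to `j`
  have hclosed : ∀ y, ReflTransGen r j y → ReflTransGen (fun x y => r x y ∧ x ∉ S) y c := by
    intro y hy
    induction hy with
    | refl => exact hjc
    | @tail y z _ hyz ih =>
      rcases ih.cases_head with rfl | ⟨w, ⟨hyw, -⟩, hwc⟩
      · obtain rfl : z = j := by rcases hcS with rfl | rfl <;> [exact hr hyz hi; exact hr hyz hi']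
        exact hjc
      · exact hr hyw hyz ▸ hwc
  have heq : ∀ y ∈ S, ReflTransGen r j y → y = c := fun y hyS hy =>
    (hclosed y hy).cases_head.resolve_right fun ⟨_, ⟨_, hy⟩, _⟩ => hy hyS
  rw [heq i (by simp [S]) h, heq i' (by simp [S]) h']

end Relation

namespace Money

section Balance

variable {ι : Type*} [Fintype ι] {b : ι × ι → ℝ} {p q : ι → ℝ}

variable (b) in
def IsBalanced (p : ι → ℝ) : Prop :=
  ∀ j, ∑ i, p i * b (i, j) = p j * ∑ i, b (j, i)

theorem IsBalanced.sub_const_mul (hp : IsBalanced b p) (hq : IsBalanced b q) (c : ℝ) :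
    IsBalanced b fun i => p i - c * q i := by
  intro j
  simp only [sub_mul, Finset.sum_sub_distrib, mul_assoc, ← Finset.mul_sum, hp j, hq j]

theorem IsBalanced.eq_zero_of_rel (hb : ∀ e, 0 ≤ b e) (hp : IsBalanced b p) (hp0 : ∀ i, 0 ≤ p i)
    {a k : ι} (hk : p k = 0) (hak : 0 < b (a, k)) : p a = 0 := by
  have hsum : ∑ i, p i * b (i, k) = 0 := by rw [hp k, hk, zero_mul]
  have hterm := (Finset.sum_eq_zero_iff_of_nonneg fun i _ => mul_nonneg (hp0 i) (hb _)).1 hsum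
    a (Finset.mem_univ a)
  exact (mul_eq_zero.1 hterm).resolve_right hak.ne'

theorem IsBalanced.eq_zero_of_reflTransGen (hb : ∀ e, 0 ≤ b e) (hp : IsBalanced b p)
    (hp0 : ∀ i, 0 ≤ p i) {a k : ι} (hk : p k = 0)
    (hak : Relation.ReflTransGen (fun x y => 0 < b (x, y)) a k) : p a = 0 := by
  induction hak using Relation.ReflTransGen.head_induction_on with
  | refl => exact hk
  | head hxy _ ih => exact hp.eq_zero_of_rel hb hp0 ih hxy

theorem IsBalanced.exists_pos_eq_mul [Nonempty ι] (hb : ∀ e, 0 ≤ b e)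
    (hirr : ∀ i k, Relation.ReflTransGen (fun x y => 0 < b (x, y)) i k)
    (hp : IsBalanced b p) (hp0 : ∀ i, 0 < p i) (hq : IsBalanced b q) (hq0 : ∀ i, 0 < q i) :
    ∃ c, 0 < c ∧ ∀ i, p i = c * q i := by
  obtain ⟨i₀, -, hi₀⟩ := Finset.exists_min_image Finset.univ (fun i => p i / q i)
    Finset.univ_nonempty
  set c := p i₀ / q i₀
  have hr0 : ∀ i, 0 ≤ p i - c * q i := fun i => by
    have := hi₀ i (Finset.mem_univ i)
    rw [le_div_iff₀ (hq0 i)] at this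
    linarith
  have hri₀ : p i₀ - c * q i₀ = 0 := by rw [div_mul_cancel₀ _ (hq0 i₀).ne', sub_self]
  refine ⟨c, div_pos (hp0 i₀) (hq0 i₀), fun i => ?_⟩
  linarith [(hp.sub_const_mul hq c).eq_zero_of_reflTransGen hb hr0 hri₀ (hirr i i₀)]

end Balance

namespace Digraph

variable {m : ℕ} {G : Digraph m} {r : Fin m} {T F : Finset (Fin m × Fin m)}
  {b : Fin m × Fin m → ℝ}

theorem isSpanTree_iff (hv : G.verts = Finset.univ) :
    G.IsSpanTree r T ↔ T ⊆ G.edges ∧ (∀ v, v ≠ r → ∃! k, (v, k) ∈ T) ∧ (∀ k, (r, k) ∉ T) ∧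
      ∀ v, Relation.ReflTransGen (fun a c => (a, c) ∈ T) v r := by
  simp [IsSpanTree, hv]

noncomputable def spanTrees (G : Digraph m) (i : Fin m) : Finset (Finset (Fin m × Fin m)) :=
  G.edges.powerset.filter fun T => G.IsSpanTree i T

theorem mem_spanTrees : T ∈ G.spanTrees r ↔ G.IsSpanTree r T :=
  ⟨fun h => (Finset.mem_filter.1 h).2, fun h => Finset.mem_filter.2
    ⟨Finset.mem_powerset.2 h.1, h⟩⟩

/-- In a functional graph, every vertex reaching `j` says that `j` lies on its unique cycle. -/
noncomputable def unicyclesThrough (G : Digraph m) (j : Fin m) :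
    Finset (Finset (Fin m × Fin m)) :=
  G.edges.powerset.filter fun F =>
    (∀ v, ∃! k, (v, k) ∈ F) ∧ ∀ v, Relation.ReflTransGen (fun a c => (a, c) ∈ F) v j

theorem isSpanTree_erase (hv : G.verts = Finset.univ) (hFE : F ⊆ G.edges)
    (hF : ∀ v, ∃! k, (v, k) ∈ F) {k : Fin m} (hrk : (r, k) ∈ F)
    (hreach : ∀ v, Relation.ReflTransGen (fun a c => (a, c) ∈ F) v r) :
    G.IsSpanTree r (F.erase (r, k)) := by
  have hmem : ∀ {a c}, a ≠ r → ((a, c) ∈ F.erase (r, k) ↔ (a, c) ∈ F) := fun ha => by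
    simp [ha]
  refine (isSpanTree_iff hv).2 ⟨(Finset.erase_subset _ _).trans hFE, fun v hvr => ?_,
    fun c hc => ?_, fun v => ?_⟩
  · simpa only [hmem hvr] using hF v
  · obtain ⟨hne, hc⟩ := Finset.mem_erase.1 hc
    exact hne (by rw [(hF r).unique hc hrk])
  · exact Relation.ReflTransGen.mono (fun a c h => (hmem h.2).2 h.1) _ _
      (hreach v).restrict_ne

theorem IsSpanTree.insert_mem_unicyclesThrough (hv : G.verts = Finset.univ)
    (hT : G.IsSpanTree r T) {k : Fin m} (hrk : (r, k) ∈ G.edges) :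
    insert (r, k) T ∈ G.unicyclesThrough r ∧ insert (r, k) T ∈ G.unicyclesThrough k := by
  obtain ⟨hTE, huniq, hroot, hreach⟩ := (isSpanTree_iff hv).1 hT
  have hfun : ∀ v, ∃! l, (v, l) ∈ insert (r, k) T := by
    intro v
    by_cases hvr : v = r
    · subst hvr
      exact ⟨k, Finset.mem_insert_self _ _, fun l hl => by simpa [hroot l] using hl⟩
    · obtain ⟨l, hl, hu⟩ := huniq v hvr
      exact ⟨l, Finset.mem_insert_of_mem hl, fun l' hl' => hu l' (by simpa [hvr] using hl')⟩
  have hreach' : ∀ v, Relation.ReflTransGen (fun a c => (a, c) ∈ insert (r, k) T) v r :=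
    fun v => Relation.ReflTransGen.mono (fun _ _ => Finset.mem_insert_of_mem) _ _ (hreach v)
  have hsub : insert (r, k) T ∈ G.edges.powerset :=
    Finset.mem_powerset.2 (Finset.insert_subset hrk hTE)
  exact ⟨Finset.mem_filter.2 ⟨hsub, hfun, hreach'⟩, Finset.mem_filter.2
    ⟨hsub, hfun, fun v => (hreach' v).tail (Finset.mem_insert_self _ _)⟩⟩

theorem mem_edges_of_ne_zero (hb0 : ∀ e ∉ G.edges, b e = 0)
    {e : Fin m × Fin m} (he : b e ≠ 0) : e ∈ G.edges :=
  by_contra fun h => he (hb0 e h)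

theorem price_mul_sum_eq_sum_unicyclesThrough (hv : G.verts = Finset.univ)
    (hb0 : ∀ e ∉ G.edges, b e = 0) (j : Fin m) :
    G.price j b * ∑ k, b (j, k) = ∑ F ∈ G.unicyclesThrough j, ∏ e ∈ F, b e := by
  simp only [price, Finset.mul_sum, Finset.sum_mul]
  rw [Finset.sum_comm, Finset.sum_sigma']
  refine Finset.sum_bij_ne_zero (fun x _ _ => insert (j, x.2) x.1) ?_ ?_ ?_ ?_
  · rintro ⟨T, k⟩ hx hne
    exact ((mem_spanTrees.1 (Finset.mem_sigma.1 hx).1).insert_mem_unicyclesThrough hv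
      (mem_edges_of_ne_zero hb0 (right_ne_zero_of_mul hne))).1
  · rintro ⟨T, k⟩ hx - ⟨T', k'⟩ hx' - h
    dsimp only at h
    have hT : G.IsSpanTree j T := mem_spanTrees.1 (Finset.mem_sigma.1 hx).1
    have hT' : G.IsSpanTree j T' := mem_spanTrees.1 (Finset.mem_sigma.1 hx').1
    obtain rfl : k = k' := by
      have hjk : (j, k) ∈ insert (j, k') T' := h ▸ Finset.mem_insert_self _ _
      simpa [hT'.2.2.1 k] using hjk
    obtain rfl : T = T' := by
      rw [← Finset.erase_insert (hT.2.2.1 k), h, Finset.erase_insert (hT'.2.2.1 k)]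
    rfl
  · intro F hF hne
    obtain ⟨hFE, hfun, hreach⟩ := Finset.mem_filter.1 hF
    obtain ⟨k, hjk, -⟩ := hfun j
    have hT := isSpanTree_erase hv (Finset.mem_powerset.1 hFE) hfun hjk hreach
    refine ⟨⟨F.erase (j, k), k⟩, Finset.mem_sigma.2 ⟨mem_spanTrees.2 hT, Finset.mem_univ _⟩, ?_,
      Finset.insert_erase hjk⟩
    rwa [mul_comm, ← Finset.prod_insert (hT.2.2.1 k), Finset.insert_erase hjk]
  · rintro ⟨T, k⟩ hx -
    rw [Finset.prod_insert ((mem_spanTrees.1 (Finset.mem_sigma.1 hx).1).2.2.1 k), mul_comm]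

theorem sum_price_mul_eq_sum_unicyclesThrough (hv : G.verts = Finset.univ)
    (hb0 : ∀ e ∉ G.edges, b e = 0) (j : Fin m) :
    ∑ i, G.price i b * b (i, j) = ∑ F ∈ G.unicyclesThrough j, ∏ e ∈ F, b e := by
  simp only [price, Finset.sum_mul]
  rw [Finset.sum_sigma']
  refine Finset.sum_bij_ne_zero (fun x _ _ => insert (x.1, j) x.2) ?_ ?_ ?_ ?_
  · rintro ⟨i, T⟩ hx hne
    exact ((mem_spanTrees.1 (Finset.mem_sigma.1 hx).2).insert_mem_unicyclesThrough hv
      (mem_edges_of_ne_zero hb0 (right_ne_zero_of_mul hne))).2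
  · rintro ⟨i, T⟩ hx hne ⟨i', T'⟩ hx' - h
    dsimp only at h
    have hT : G.IsSpanTree i T := mem_spanTrees.1 (Finset.mem_sigma.1 hx).2
    have hT' : G.IsSpanTree i' T' := mem_spanTrees.1 (Finset.mem_sigma.1 hx').2
    obtain ⟨-, hfun, -⟩ := Finset.mem_filter.1 (hT.insert_mem_unicyclesThrough hv
      (mem_edges_of_ne_zero hb0 (right_ne_zero_of_mul hne))).2
    have hji : Relation.ReflTransGen (fun a c => (a, c) ∈ insert (i, j) T) j i :=
      Relation.ReflTransGen.mono (fun _ _ => Finset.mem_insert_of_mem) _ _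
        (hT.2.2.2 j (hv ▸ Finset.mem_univ j))
    have hji' : Relation.ReflTransGen (fun a c => (a, c) ∈ insert (i, j) T) j i' := h ▸
      Relation.ReflTransGen.mono (fun _ _ => Finset.mem_insert_of_mem) _ _
        (hT'.2.2.2 j (hv ▸ Finset.mem_univ j))
    obtain rfl : i = i' := Relation.eq_of_rel_of_rel_of_reflTransGen
      (fun a _ _ => (hfun a).unique) (Finset.mem_insert_self _ _)
      (h ▸ Finset.mem_insert_self _ _) hji hji'
    obtain rfl : T = T' := by
      rw [← Finset.erase_insert (hT.2.2.1 j), h, Finset.erase_insert (hT'.2.2.1 j)]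
    rfl
  · intro F hF hne
    obtain ⟨hFE, hfun, hreach⟩ := Finset.mem_filter.1 hF
    obtain ⟨k, hjk, -⟩ := hfun j
    obtain ⟨i, hji, hij⟩ :=
      Relation.TransGen.tail'_iff.1 (Relation.TransGen.head' hjk (hreach k))
    have hT := isSpanTree_erase hv (Finset.mem_powerset.1 hFE) hfun hij
      fun v => (hreach v).trans hji
    refine ⟨⟨i, F.erase (i, j)⟩, Finset.mem_sigma.2 ⟨Finset.mem_univ _, mem_spanTrees.2 hT⟩,
      ?_, Finset.insert_erase hij⟩
    rwa [mul_comm, ← Finset.prod_insert (hT.2.2.1 j), Finset.insert_erase hij]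
  · rintro ⟨i, T⟩ hx -
    rw [Finset.prod_insert ((mem_spanTrees.1 (Finset.mem_sigma.1 hx).2).2.2.1 j), mul_comm]

theorem isBalanced_price (hv : G.verts = Finset.univ) (hb0 : ∀ e ∉ G.edges, b e = 0) :
    IsBalanced b (G.price · b) := fun j => by
  rw [sum_price_mul_eq_sum_unicyclesThrough hv hb0, price_mul_sum_eq_sum_unicyclesThrough hv hb0]

theorem price_pos (hb : ∀ e ∈ G.edges, 0 < b e)
    (hT : G.IsSpanTree r T) : 0 < G.price r b :=
  Finset.sum_pos (fun _ hT' => Finset.prod_pos fun e he => hb e ((mem_spanTrees.1 hT').1 he))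
    ⟨T, mem_spanTrees.2 hT⟩

theorem exists_isSpanTree_of_descent (hv : G.verts = Finset.univ) (d : Fin m → ℕ)
    (hd : ∀ v, v ≠ r → ∃ w, (v, w) ∈ G.edges ∧ d w < d v) : ∃ T, G.IsSpanTree r T := by
  have hstep : ∀ v, ∃ w, v ≠ r → (v, w) ∈ G.edges ∧ d w < d v := fun v => by
    by_cases hvr : v = r
    · exact ⟨v, fun h => absurd hvr h⟩
    · exact (hd v hvr).imp fun _ h _ => h
  choose f hf using hstep
  have hmem : ∀ a c, (a, c) ∈ G.edges.filter (fun e => e.1 ≠ r ∧ e.2 = f e.1) ↔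
      a ≠ r ∧ c = f a := fun a c => by
    simp only [Finset.mem_filter, and_iff_right_iff_imp]
    rintro ⟨har, rfl⟩
    exact (hf a har).1
  refine ⟨G.edges.filter (fun e => e.1 ≠ r ∧ e.2 = f e.1), (isSpanTree_iff hv).2
    ⟨Finset.filter_subset _ _, fun v hvr => ?_, fun k hk => ?_, fun v => ?_⟩⟩
  · exact ⟨f v, (hmem v _).2 ⟨hvr, rfl⟩, fun k hk => ((hmem v k).1 hk).2⟩
  · exact ((hmem r k).1 hk).1 rfl
  · induction v using (measure d).wf.induction with
    | h v ih =>
      by_cases hvr : v = r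
      · exact hvr ▸ .refl
      · exact .head ((hmem v _).2 ⟨hvr, rfl⟩) (ih (f v) (hf v hvr).2)

theorem HasWalk.cons {i w j : Fin m} {k : ℕ} (h : (i, w) ∈ G.edges) (hw : G.HasWalk w j k) :
    G.HasWalk i j (k + 1) := by
  obtain ⟨g, rfl, rfl, hg⟩ := hw
  refine ⟨fun t => match t with | 0 => i | t + 1 => g t, rfl, rfl, fun t ht => ?_⟩
  cases t with
  | zero => exact h
  | succ t => exact hg t (by omega)

theorem HasWalk.exists_edge_of_succ {i j : Fin m} {k : ℕ} (h : G.HasWalk i j (k + 1)) :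
    ∃ w, (i, w) ∈ G.edges ∧ G.HasWalk w j k := by
  obtain ⟨g, rfl, rfl, hg⟩ := h
  exact ⟨g 1, hg 0 k.succ_pos, fun t => g (t + 1), rfl, rfl, fun t ht => hg (t + 1) (by omega)⟩

theorem Reaches.exists_hasWalk {i j : Fin m} (h : G.Reaches i j) : ∃ k, G.HasWalk i j k := by
  induction h using Relation.ReflTransGen.head_induction_on with
  | refl => exact ⟨0, fun _ => j, rfl, rfl, fun t ht => absurd ht (Nat.not_lt_zero t)⟩
  | head hab _ ih =>
    obtain ⟨k, hk⟩ := ih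
    exact ⟨k + 1, hk.cons hab⟩

theorem Reaches.exists_edge_dist_lt {i j : Fin m} (h : G.Reaches i j) (hij : i ≠ j) :
    ∃ w, (i, w) ∈ G.edges ∧ G.dist w j < G.dist i j := by
  have hd : G.HasWalk i j (G.dist i j) := Nat.sInf_mem h.exists_hasWalk
  obtain ⟨k, hk⟩ : ∃ k, G.dist i j = k + 1 := Nat.exists_eq_succ_of_ne_zero fun h0 => by
    obtain ⟨g, rfl, rfl, -⟩ := h0 ▸ hd
    exact hij rfl
  rw [hk] at hd ⊢
  obtain ⟨w, hiw, hw⟩ := hd.exists_edge_of_succ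
  exact ⟨w, hiw, Nat.lt_succ_of_le (Nat.sInf_le hw)⟩

theorem exists_isSpanTree (hv : G.verts = Finset.univ) (hreach : ∀ v, G.Reaches v r) :
    ∃ T, G.IsSpanTree r T :=
  exists_isSpanTree_of_descent hv (G.dist · r) fun v hvr => (hreach v).exists_edge_dist_lt hvr

end Digraph

end Money

open Money Money.Digraph

/-- existence and uniqueness (up to a positive scalar) of the
positive solution of the balance equations; the spanning-tree vector is a
solution. -/
theorem stmt4 (m : ℕ) (G : Money.Digraph m)
    (hv : G.verts = Finset.univ) (hc : G.Connected)
    (b : Fin m × Fin m → ℝ)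
    (hb : ∀ e ∈ G.edges, 0 < b e) (hb0 : ∀ e ∉ G.edges, b e = 0) :
    (∀ i, 0 < G.price i b) ∧
    (∀ j, ∑ i, G.price i b * b (i, j) = G.price j b * ∑ i, b (j, i)) ∧
    (∀ p : Fin m → ℝ, (∀ i, 0 < p i) →
      (∀ j, ∑ i, p i * b (i, j) = p j * ∑ i, b (j, i)) →
      ∃ c : ℝ, 0 < c ∧ ∀ i, p i = c * G.price i b) := by
  have hreach : ∀ i k, G.Reaches i k := fun i k =>
    hc.2 i (hv ▸ Finset.mem_univ i) k (hv ▸ Finset.mem_univ k)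
  have hpos : ∀ i, 0 < G.price i b := fun i =>
    (exists_isSpanTree hv (hreach · i)).elim fun _ hT => price_pos hb hT
  have hbal : IsBalanced b (G.price · b) := isBalanced_price hv hb0
  refine ⟨hpos, hbal, fun p hp0 hp => ?_⟩
  have : Nonempty (Fin m) := hc.1.nonempty
  have hb_nonneg : ∀ e, 0 ≤ b e := fun e => by
    by_cases he : e ∈ G.edges
    · exact (hb e he).le
    · exact (hb0 e he).ge
  exact IsBalanced.exists_pos_eq_mul hb_nonneg
    (fun i k => Relation.ReflTransGen.mono (fun _ _ => hb _) _ _ (hreach i k)) hp hp0 hbal hpos
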